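/- arXiv:1501.01787 — 3 statements merged into one kernel-verified Lean document; each statement's English description precedes it below -/
import Mathlib

section
/- Let K be a simplicial complex on [m] which is not the full simplex, and let ℙ = {τ₁,…,τᵣ} be a simplicial complement of K. For each i let U_i be the interior of the geometric realization of the star of τ_i in the boundary complex ∂Δ^{m-1}. Then the family {U_i} is an open cover of U(K) := |∂Δ^{m-1}| \ |K|. -/
open Classical
noncomputable section

/-- `K` is an (abstract) simplicial complex: closed under taking subsets. -/
def IsComplex {m : ℕ} (K : Set (Finset (Fin m))) : Prop :=
  ∀ σ ∈ K, ∀ τ, τ ⊆ σ → τ ∈ K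

/-- `τ` is a missing face of `K`. -/
def MissingFace {m : ℕ} (K : Set (Finset (Fin m))) (τ : Finset (Fin m)) : Prop :=
  τ ∉ K ∧ ∀ σ, σ ⊂ τ → σ ∈ K

/-- `P` is a simplicial complement of `K`: a set of non-faces containing all missing faces. -/
def IsSimplicialComplement {m : ℕ} (K P : Set (Finset (Fin m))) : Prop :=
  (∀ τ ∈ P, τ ∉ K) ∧ ∀ τ, MissingFace K τ → τ ∈ P

/-- The support of a point of the standard simplex, as a finset. -/
def supp {m : ℕ} (x : Fin m → ℝ) : Finset (Fin m) :=
  Finset.univ.filter (fun i => x i ≠ 0)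

/-- The geometric realization `|∂Δ^{m-1}|` of the boundary of the simplex on `[m]`. -/
def bdSimplex (m : ℕ) : Set (Fin m → ℝ) :=
  {x | x ∈ stdSimplex ℝ (Fin m) ∧ supp x ≠ Finset.univ}

/-- The geometric realization of a collection `L` of faces, inside `|∂Δ^{m-1}|`. -/
def realize {m : ℕ} (L : Set (Finset (Fin m))) : Set (bdSimplex m) :=
  {x | ∃ σ ∈ L, supp x.1 ⊆ σ}

/-- The star of `τ` in `∂Δ^{m-1}`: faces `σ` with `σ ∪ τ ∈ ∂Δ^{m-1}`. -/
def starC {m : ℕ} (τ : Finset (Fin m)) : Set (Finset (Fin m)) :=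
  {σ | σ ∪ τ ≠ Finset.univ}

/-- `U_τ`: the interior, taken in `|∂Δ^{m-1}|`, of the realized star of `τ`. -/
def Ustar {m : ℕ} (τ : Finset (Fin m)) : Set (bdSimplex m) :=
  interior (realize (starC τ))

/-- The relative interior of the realized face `σ` inside `|∂Δ^{m-1}|`. -/
def relint {m : ℕ} (σ : Finset (Fin m)) : Set (bdSimplex m) :=
  {x | supp x.1 = σ}


/-- For a simplicial complex `K` on `[m]` which is not the full simplex and a
simplicial complement `P` of `K`, the sets `U_τ = int|star_{∂Δ}(τ)|`, `τ ∈ P`, form an open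
cover of `U(K) = |∂Δ^{m-1}| \\ |K|`. -/
theorem ustar_isOpenCover {m : ℕ} (K P : Set (Finset (Fin m)))
    (hK : IsComplex K) (hns : K ≠ Set.univ) (hP : IsSimplicialComplement K P) :
    (∀ τ ∈ P, IsOpen (Ustar τ)) ∧ (realize K)ᶜ ⊆ ⋃ τ ∈ P, Ustar τ := by
  constructor
  · intro τ _
    exact isOpen_interior
  · intro x hx
    have hsupp : supp x.1 ∉ K := fun h => hx ⟨_, h, subset_rfl⟩
    obtain ⟨τ, hτmem, hτmin⟩ := Finset.exists_min_image
      ((supp x.1).powerset.filter (fun s => s ∉ K)) Finset.card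
      ⟨supp x.1, by simp [hsupp]⟩
    simp only [Finset.mem_filter, Finset.mem_powerset] at hτmem
    have hmiss : MissingFace K τ := by
      refine ⟨hτmem.2, fun σ hσ => ?_⟩
      by_contra hσK
      have hle : τ.card ≤ σ.card := hτmin σ (by
        simp only [Finset.mem_filter, Finset.mem_powerset]
        exact ⟨hσ.subset.trans hτmem.1, hσK⟩)
      exact absurd (Finset.card_lt_card hσ) (not_lt.2 hle)
    refine Set.mem_iUnion₂.2 ⟨τ, hP.2 τ hmiss, ?_⟩
    have hV : IsOpen {y : bdSimplex m | ∀ i ∈ τ, y.1 i ≠ 0} := by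
      have heq : {y : bdSimplex m | ∀ i ∈ τ, y.1 i ≠ 0} =
          ⋂ i ∈ τ, {y : bdSimplex m | y.1 i ≠ 0} := by
        ext y; simp
      rw [heq]
      refine isOpen_biInter_finset fun i _ => ?_
      exact isOpen_ne.preimage ((continuous_apply i).comp continuous_subtype_val)
    refine mem_interior.2 ⟨_, ?_, hV, ?_⟩
    · intro y hy
      have hsub : τ ⊆ supp y.1 := fun i hi =>
        Finset.mem_filter.2 ⟨Finset.mem_univ i, hy i hi⟩
      exact ⟨supp y.1, by
        simp only [starC, Set.mem_setOf_eq, Finset.union_eq_left.2 hsub]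
        exact y.2.2, subset_rfl⟩
    · intro i hi
      exact (Finset.mem_filter.1 (hτmem.1 hi)).2
end
end

section
/- Let τ_i, τ_j be nonempty subsets of [m] with τ_i ∪ τ_j = [m]. Then the interiors of |star_{∂Δ^{m-1}}(τ_i)| and |star_{∂Δ^{m-1}}(τ_j)| are disjoint. -/
open Classical
noncomputable section

/-! Let `x` lie in both interiors. Being in the star of `τ_j`, `x` vanishes at some `l ∉ τ_j`,
so `l ∈ τ_i`. But `x` is a limit of points of the open facet opposite `l`, whose support is
`[m] \ {l}`; such points near `x` lie in the star of `τ_i`, forcing `([m] \ {l}) ∪ τ_i ≠ [m]`,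
i.e. `l ∉ τ_i`. -/

open Finset Filter Topology

variable {m : ℕ}

lemma mem_supp {x : Fin m → ℝ} {i : Fin m} : i ∈ supp x ↔ x i ≠ 0 := by
  simp [supp]

lemma supp_nonempty_of_mem_stdSimplex {x : Fin m → ℝ} (hx : x ∈ stdSimplex ℝ (Fin m)) :
    (supp x).Nonempty := by
  by_contra h
  have hzero : ∀ i, x i = 0 := by
    simpa [not_nonempty_iff_eq_empty, eq_empty_iff_forall_notMem, mem_supp] using h
  simpa [hzero] using hx.2

lemma exists_mem_stdSimplex_supp_eq {s : Finset (Fin m)} (hs : s.Nonempty) :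
    ∃ c ∈ stdSimplex ℝ (Fin m), supp c = s := by
  have hcard : (#s : ℝ) ≠ 0 := by exact_mod_cast hs.card_pos.ne'
  refine ⟨fun i => if i ∈ s then (#s : ℝ)⁻¹ else 0, ⟨fun i => by positivity, ?_⟩, ?_⟩
  · simp [sum_ite_mem, hcard]
  · ext i
    by_cases hi : i ∈ s <;> simp [mem_supp, hi, hcard]

lemma supp_lineMap {x c : Fin m → ℝ} (hx : ∀ i, 0 ≤ x i) (hc : ∀ i, 0 ≤ c i) {t : ℝ}
    (ht : t ∈ Set.Ioo 0 1) : supp (AffineMap.lineMap x c t) = supp x ∪ supp c := by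
  ext i
  have h₁ : 0 < 1 - t := sub_pos.2 ht.2
  rw [mem_union, mem_supp, mem_supp, mem_supp, AffineMap.lineMap_apply_module, Ne,
    Pi.add_apply, Pi.smul_apply, Pi.smul_apply, smul_eq_mul, smul_eq_mul,
    add_eq_zero_iff_of_nonneg (mul_nonneg h₁.le (hx i)) (mul_nonneg ht.1.le (hc i)),
    mul_eq_zero, mul_eq_zero, or_iff_right h₁.ne', or_iff_right ht.1.ne', not_and_or]

lemma mem_closure_relint_erase {x : bdSimplex m} {l : Fin m} (hl : x.1 l = 0) :
    x ∈ closure (relint (univ.erase l)) := by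
  have hsub : supp x.1 ⊆ univ.erase l := fun i hi =>
    mem_erase.2 ⟨fun hil => mem_supp.1 hi (hil ▸ hl), mem_univ i⟩
  obtain ⟨c, hc, hsuppc⟩ :=
    exists_mem_stdSimplex_supp_eq ((supp_nonempty_of_mem_stdSimplex x.2.1).mono hsub)
  rw [closure_subtype]
  refine mem_closure_of_tendsto (f := AffineMap.lineMap x.1 c) (b := 𝓝[>] (0 : ℝ)) ?_ ?_
  · have hcont := (AffineMap.lineMap_continuous (R := ℝ) (p := x.1) (q := c)).tendsto 0
    simpa using hcont.mono_left nhdsWithin_le_nhds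
  · filter_upwards [Ioo_mem_nhdsGT one_pos] with t ht
    have hsupp : supp (AffineMap.lineMap x.1 c t) = univ.erase l := by
      rw [supp_lineMap x.2.1.1 hc.1 ht, hsuppc, union_eq_right.2 hsub]
    refine ⟨⟨_, (convex_stdSimplex ℝ _).lineMap_mem x.2.1 hc ⟨ht.1.le, ht.2.le⟩, ?_⟩, hsupp, rfl⟩
    rw [hsupp]
    exact (erase_ssubset (mem_univ l)).ne

lemma mem_realize_starC_iff {τ : Finset (Fin m)} {x : bdSimplex m} :
    x ∈ realize (starC τ) ↔ supp x.1 ∪ τ ≠ univ :=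
  ⟨fun ⟨_, hσ, hsub⟩ h => hσ (univ_subset_iff.1 (h ▸ union_subset_union_left hsub)),
    fun h => ⟨supp x.1, h, subset_rfl⟩⟩

lemma exists_eq_zero_notMem_of_mem_realize_starC {τ : Finset (Fin m)} {x : bdSimplex m}
    (hx : x ∈ realize (starC τ)) : ∃ l, x.1 l = 0 ∧ l ∉ τ := by
  obtain ⟨l, hl⟩ := not_forall.1 (mt eq_univ_iff_forall.2 (mem_realize_starC_iff.1 hx))
  rw [mem_union, not_or, mem_supp, not_not] at hl
  exact ⟨l, hl⟩

lemma notMem_of_mem_Ustar {τ : Finset (Fin m)} {x : bdSimplex m} {l : Fin m}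
    (hx : x ∈ Ustar τ) (hl : x.1 l = 0) : l ∉ τ := by
  obtain ⟨y, hyU, hy⟩ := mem_closure_iff.1 (mem_closure_relint_erase hl) _ isOpen_interior hx
  intro hlτ
  apply mem_realize_starC_iff.1 (interior_subset hyU)
  rw [show supp y.1 = univ.erase l from hy, erase_union_of_mem hlτ,
    union_eq_left.2 (subset_univ τ)]

theorem ustar_inter_of_union_eq_univ_general {m : ℕ} (τi τj : Finset (Fin m))
    (h : τi ∪ τj = Finset.univ) :
    Ustar τi ∩ Ustar τj = ∅ := by
  refine Set.eq_empty_of_forall_notMem fun x ⟨hxi, hxj⟩ => ?_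
  obtain ⟨l, hxl, hlj⟩ := exists_eq_zero_notMem_of_mem_realize_starC (interior_subset hxj)
  have hli : l ∈ τi := (mem_union.1 (h ▸ mem_univ l)).resolve_right hlj
  exact notMem_of_mem_Ustar hxi hxl hli

/-- If `τ_i ∪ τ_j = [m]`, then the interiors of the realized stars of `τ_i`
and `τ_j` in `∂Δ^{m-1}` are disjoint. -/
theorem ustar_inter_of_union_eq_univ {m : ℕ} (τi τj : Finset (Fin m))
    (hi : τi.Nonempty) (hj : τj.Nonempty) (h : τi ∪ τj = Finset.univ) :
    Ustar τi ∩ Ustar τj = ∅ :=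
  ustar_inter_of_union_eq_univ_general τi τj h
end
end

section
/- More generally, for nonempty subsets τ_{i_1},…,τ_{i_n} of [m] (proper subsets), the intersection U_{i_1} ∩ ⋯ ∩ U_{i_n} of the interiors of the realizations of their stars in ∂Δ^{m-1} is nonempty if and only if τ_{i_1} ∪ ⋯ ∪ τ_{i_n} ≠ [m]. -/
open Classical
noncomputable section

/-! The interior `U_τ` is the set of points whose support contains `τ`: a point vanishing at
a vertex `j ∈ τ` is a limit of points supported on exactly `[m] \ {j}`, which leave the star.
Hence `⋂ U_{τ_a}` consists of the points whose support contains `⋃ τ_a`, and when `⋃ τ_a` is a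
proper nonempty face its barycenter is such a point. -/

lemma mem_supp_iff {m : ℕ} {x : Fin m → ℝ} {i : Fin m} : i ∈ supp x ↔ x i ≠ 0 := by
  simp [supp]

lemma isOpen_setOf_subset_supp {m : ℕ} (τ : Finset (Fin m)) :
    IsOpen {x : Fin m → ℝ | τ ⊆ supp x} := by
  have hτ : {x : Fin m → ℝ | τ ⊆ supp x} = ⋂ i ∈ τ, {x | x i ≠ 0} := by
    ext x
    simp [Finset.subset_iff, mem_supp_iff]
  rw [hτ]
  exact isOpen_biInter_finset fun i _ => isOpen_ne_fun (continuous_apply i) continuous_const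

lemma realize_starC {m : ℕ} (τ : Finset (Fin m)) :
    realize (starC τ) = {x : bdSimplex m | supp x.1 ∪ τ ≠ Finset.univ} := by
  ext x
  constructor
  · rintro ⟨σ, hσ, hsub⟩ h
    exact hσ (Finset.univ_subset_iff.mp (h ▸ Finset.union_subset_union hsub subset_rfl))
  · exact fun h => ⟨supp x.1, h, subset_rfl⟩

def faceBarycenter {m : ℕ} (s : Finset (Fin m)) : Fin m → ℝ :=
  fun i => if i ∈ s then (s.card : ℝ)⁻¹ else 0

lemma faceBarycenter_nonneg {m : ℕ} (s : Finset (Fin m)) (i : Fin m) :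
    0 ≤ faceBarycenter s i := by
  unfold faceBarycenter
  split <;> positivity

lemma supp_faceBarycenter {m : ℕ} (s : Finset (Fin m)) : supp (faceBarycenter s) = s := by
  ext i
  by_cases hi : i ∈ s
  · have hcard : (s.card : ℝ) ≠ 0 := by exact_mod_cast (Finset.card_pos.mpr ⟨i, hi⟩).ne'
    simp [mem_supp_iff, faceBarycenter, hi, hcard]
  · simp [mem_supp_iff, faceBarycenter, hi]

lemma faceBarycenter_mem_stdSimplex {m : ℕ} {s : Finset (Fin m)} (hs : s.Nonempty) :
    faceBarycenter s ∈ stdSimplex ℝ (Fin m) := by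
  refine ⟨faceBarycenter_nonneg s, ?_⟩
  have hcard : (s.card : ℝ) ≠ 0 := by exact_mod_cast hs.card_pos.ne'
  simp [faceBarycenter, Finset.sum_ite_mem, hcard]

lemma faceBarycenter_mem_bdSimplex {m : ℕ} {s : Finset (Fin m)} (hs : s.Nonempty)
    (hs' : s ≠ Finset.univ) : faceBarycenter s ∈ bdSimplex m :=
  ⟨faceBarycenter_mem_stdSimplex hs, by rwa [supp_faceBarycenter]⟩

/-- Pushing `x` slightly towards the barycenter of the facet opposite to `j` fills in every
vertex except `j`. -/
lemma mem_closure_setOf_supp_eq_erase {m : ℕ} (x : bdSimplex m) {j : Fin m} (hj : x.1 j = 0) :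
    x ∈ closure {y : bdSimplex m | supp y.1 = Finset.univ.erase j} := by
  set u := faceBarycenter (Finset.univ.erase j)
  have hu : u ∈ stdSimplex ℝ (Fin m) := by
    obtain ⟨i, hi⟩ : ∃ i, x.1 i ≠ 0 := by
      by_contra! h
      simpa [h] using x.2.1.2
    exact faceBarycenter_mem_stdSimplex
      ⟨i, Finset.mem_erase.mpr ⟨fun h => hi (h ▸ hj), Finset.mem_univ i⟩⟩
  set f : ℝ → Fin m → ℝ := fun t => (1 - t) • x.1 + t • u
  have hf_supp : ∀ t ∈ Set.Ioo (0 : ℝ) 1, supp (f t) = Finset.univ.erase j := by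
    rintro t ⟨ht0, ht1⟩
    ext i
    by_cases hij : i = j
    · subst hij
      simp [mem_supp_iff, f, u, faceBarycenter, hj]
    · have hx : 0 ≤ (1 - t) * x.1 i := mul_nonneg (by linarith) (x.2.1.1 i)
      have hui : 0 < u i := by
        have hcard : (0 : ℝ) < (Finset.univ.erase j).card := by
          exact_mod_cast Finset.card_pos.mpr ⟨i, by simp [hij]⟩
        simpa [u, faceBarycenter, hij] using hcard
      have : 0 < f t i := by simpa [f] using add_pos_of_nonneg_of_pos hx (mul_pos ht0 hui)
      simp [mem_supp_iff, hij, this.ne']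
  have hf_mem : ∀ t ∈ Set.Ioo (0 : ℝ) 1, f t ∈ bdSimplex m := fun t ht =>
    ⟨convex_stdSimplex ℝ (Fin m) x.2.1 hu (by linarith [ht.2]) ht.1.le (by ring),
      by simp [hf_supp t ht]⟩
  have hf_lim : Filter.Tendsto f (nhdsWithin 0 (Set.Ioi 0)) (nhds x.1) :=
    ((by fun_prop : Continuous f).tendsto' 0 x.1 (by simp [f])).mono_left nhdsWithin_le_nhds
  rw [closure_subtype]
  refine mem_closure_of_tendsto hf_lim ?_
  filter_upwards [Ioo_mem_nhdsGT one_pos] with t ht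
  exact ⟨⟨f t, hf_mem t ht⟩, hf_supp t ht, rfl⟩

lemma ustar_eq_setOf_subset_supp {m : ℕ} (τ : Finset (Fin m)) :
    Ustar τ = {x : bdSimplex m | τ ⊆ supp x.1} := by
  apply subset_antisymm
  · intro x hx
    by_contra hτ
    obtain ⟨j, hjτ, hj⟩ : ∃ j ∈ τ, x.1 j = 0 := by
      simpa [mem_supp_iff, Finset.subset_iff] using hτ
    obtain ⟨y, hyU, hy⟩ :=
      mem_closure_iff.mp (mem_closure_setOf_supp_eq_erase x hj) _ isOpen_interior hx
    have hyS := interior_subset hyU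
    rw [realize_starC] at hyS
    refine hyS (Finset.eq_univ_of_forall fun i => ?_)
    by_cases hij : i = j
    · exact Finset.mem_union_right _ (hij ▸ hjτ)
    · exact Finset.mem_union_left _ (by simp [Set.mem_ofPred_eq.mp hy, hij])
  · refine interior_maximal (fun x hx => ?_)
      ((isOpen_setOf_subset_supp τ).preimage continuous_subtype_val)
    rw [realize_starC, Set.mem_ofPred_eq, Finset.union_eq_left.mpr hx]
    exact x.2.2

theorem iInter_ustar_nonempty_iff_general {m n : ℕ} (hn : 0 < n) (τ : Fin n → Finset (Fin m))
    (h1 : ∀ a, (τ a).Nonempty) :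
    (⋂ a, Ustar (τ a)).Nonempty ↔ Finset.univ.sup τ ≠ Finset.univ := by
  simp only [ustar_eq_setOf_subset_supp, Set.nonempty_def, Set.mem_iInter, Set.mem_ofPred_eq]
  constructor
  · rintro ⟨x, hx⟩ hsup
    exact x.2.2 (Finset.univ_subset_iff.mp (hsup ▸ Finset.sup_le fun a _ => hx a))
  · intro hsup
    have hne : (Finset.univ.sup τ).Nonempty :=
      (h1 ⟨0, hn⟩).mono (Finset.le_sup (Finset.mem_univ _))
    refine ⟨⟨_, faceBarycenter_mem_bdSimplex hne hsup⟩, fun a => ?_⟩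
    rw [supp_faceBarycenter]
    exact Finset.le_sup (Finset.mem_univ a)

/-- For nonempty proper subsets `τ_1, …, τ_n` of `[m]` (`n ≥ 1`), the
intersection `U_1 ∩ ⋯ ∩ U_n` of the interiors of the realized stars is nonempty iff
`τ_1 ∪ ⋯ ∪ τ_n ≠ [m]`. -/
theorem iInter_ustar_nonempty_iff {m n : ℕ} (hn : 0 < n) (τ : Fin n → Finset (Fin m))
    (h1 : ∀ a, (τ a).Nonempty) (h2 : ∀ a, τ a ≠ Finset.univ) :
    (⋂ a, Ustar (τ a)).Nonempty ↔ Finset.univ.sup τ ≠ Finset.univ :=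
  iInter_ustar_nonempty_iff_general hn τ h1
end
end
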